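/- Let n ≥ 3 be an odd integer, let ε, μ > 0 and c ∈ ℝ, and let e, e', h, h' ∈ ℝⁿ be such that the stacked vector (ε(e' − e), μ(h' − h)) ∈ ℝ^{2n} equals c · 𝒜_n⁻¹ℬ_n applied to the stacked vector ((e' + e)/2, (h' + h)/2). Then ε‖e'‖² + μ‖h'‖² = ε‖e‖² + μ‖h‖², where ‖·‖ is the Euclidean norm on ℝⁿ. -/

import Mathlib

open Matrix

/-- The n×n circulant matrix with 1 on the diagonal and 1/2 on the (mod n)
super- and sub-diagonals. -/
noncomputable def matA (n : ℕ) [NeZero n] : Matrix (Fin n) (Fin n) ℝ :=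
  fun i j => if j = i then 1 else if j = i + 1 ∨ j = i - 1 then (1 : ℝ)/2 else 0

/-- The n×n circulant central-difference matrix with 1 on the (mod n)
super-diagonal and -1 on the (mod n) sub-diagonal. -/
def matB (n : ℕ) [NeZero n] : Matrix (Fin n) (Fin n) ℝ :=
  fun i j => if j = i + 1 then 1 else if j = i - 1 then -1 else 0

/-- The 2n×2n block-diagonal matrix diag(A, A). -/
noncomputable def calA (n : ℕ) [NeZero n] : Matrix (Fin n ⊕ Fin n) (Fin n ⊕ Fin n) ℝ :=
  Matrix.fromBlocks (matA n) 0 0 (matA n)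

/-- The 2n×2n block matrix [[0, B],[B, 0]]. -/
def calB (n : ℕ) [NeZero n] : Matrix (Fin n ⊕ Fin n) (Fin n ⊕ Fin n) ℝ :=
  Matrix.fromBlocks 0 (matB n) (matB n) 0

/-!
`𝒜` and `ℬ` are built from circulant blocks, so they commute; `𝒜` is symmetric and `ℬ` is
skew-symmetric, hence so is `𝒜⁻¹ℬ`, and `(c • 𝒜⁻¹ℬ w) ⬝ᵥ w = 0` for every `w`. Pairing the stage
equation with the midpoint `w = ((e' + e)/2, (h' + h)/2)` turns its left side into
`ε/2 (‖e'‖² - ‖e‖²) + μ/2 (‖h'‖² - ‖h‖²)`, which therefore vanishes.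
-/

namespace Matrix

variable {ι R : Type*} [Fintype ι]

theorem mulVec_dotProduct_self_eq_zero [CommRing R] [IsAddTorsionFree R] {M : Matrix ι ι R}
    (hM : Mᵀ = -M) (w : ι → R) : M *ᵥ w ⬝ᵥ w = 0 := by
  refine self_eq_neg.mp ?_
  calc M *ᵥ w ⬝ᵥ w = Mᵀ *ᵥ w ⬝ᵥ w := by
        rw [mulVec_transpose, ← dotProduct_mulVec, dotProduct_comm]
    _ = -(M *ᵥ w ⬝ᵥ w) := by rw [hM, neg_mulVec, neg_dotProduct]

variable [DecidableEq ι] [CommRing R]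

theorem commute_nonsing_inv_left {A B : Matrix ι ι R} (h : Commute A B) : Commute A⁻¹ B := by
  by_cases hA : IsUnit A
  · obtain ⟨u, rfl⟩ := hA
    rw [← coe_units_inv]
    exact h.units_inv_left
  · rw [nonsing_inv_apply_not_isUnit A (by rwa [← isUnit_iff_isUnit_det])]
    exact Commute.zero_left B

theorem transpose_nonsing_inv_mul_eq_neg {A B : Matrix ι ι R} (hA : A.IsSymm) (hB : Bᵀ = -B)
    (hAB : Commute A B) : (A⁻¹ * B)ᵀ = -(A⁻¹ * B) := by
  rw [transpose_mul, transpose_nonsing_inv, hA.eq, hB, Matrix.neg_mul,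
    (commute_nonsing_inv_left hAB).eq]

end Matrix

open Fin.CommRing in
theorem Fin.neg_one_ne_one_of_three_le {n : ℕ} [NeZero n] (hn : 3 ≤ n) : (-1 : Fin n) ≠ 1 :=
  haveI : Fact (2 < n) := ⟨hn⟩
  CharP.neg_one_ne_one (Fin n) n

theorem eq_add_iff_sub_eq_neg {G : Type*} [AddCommGroup G] {i j a : G} :
    j = i + a ↔ i - j = -a := by
  rw [← neg_sub, neg_inj, sub_eq_iff_eq_add']

theorem eq_sub_iff_sub_eq {G : Type*} [AddCommGroup G] {i j a : G} : j = i - a ↔ i - j = a := by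
  rw [eq_sub_iff_add_eq, sub_eq_iff_eq_add', eq_comm]

theorem matA_eq_circulant (n : ℕ) [NeZero n] :
    matA n = circulant fun k : Fin n =>
      if k = 0 then 1 else if k = -1 ∨ k = 1 then 1 / 2 else 0 := by
  ext i j
  simp only [matA, circulant_apply, eq_add_iff_sub_eq_neg, eq_sub_iff_sub_eq, @eq_comm _ j i,
    ← sub_eq_zero (a := i)]

theorem matB_eq_circulant (n : ℕ) [NeZero n] :
    matB n = circulant fun k : Fin n => if k = -1 then 1 else if k = 1 then -1 else 0 := by
  ext i j
  simp only [matB, circulant_apply, eq_add_iff_sub_eq_neg, eq_sub_iff_sub_eq]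

theorem matA_isSymm (n : ℕ) [NeZero n] : (matA n).IsSymm := by
  rw [IsSymm, matA_eq_circulant, transpose_circulant, circulant_inj]
  funext k
  simp only [neg_eq_iff_eq_neg, neg_zero, neg_neg, or_comm]

theorem transpose_matB (n : ℕ) [NeZero n] (hn : 3 ≤ n) : (matB n)ᵀ = -matB n := by
  have h1 := Fin.neg_one_ne_one_of_three_le hn
  rw [matB_eq_circulant, transpose_circulant]
  ext i j
  simp only [circulant_apply, neg_eq_iff_eq_neg, neg_neg]
  split_ifs <;> simp_all [eq_comm (a := (1 : Fin n))]

theorem commute_matA_matB (n : ℕ) [NeZero n] : Commute (matA n) (matB n) := by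
  rw [Commute, SemiconjBy, matA_eq_circulant, matB_eq_circulant, circulant_mul_comm]

theorem calA_isSymm (n : ℕ) [NeZero n] : (calA n).IsSymm :=
  (matA_isSymm n).fromBlocks transpose_zero (matA_isSymm n)

theorem transpose_calB (n : ℕ) [NeZero n] (hn : 3 ≤ n) : (calB n)ᵀ = -calB n := by
  simp [calB, fromBlocks_transpose, transpose_matB n hn, fromBlocks_neg]

theorem commute_calA_calB (n : ℕ) [NeZero n] : Commute (calA n) (calB n) := by
  simp [Commute, SemiconjBy, calA, calB, fromBlocks_multiply, (commute_matA_matB n).eq]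

theorem EuclideanSpace.dotProduct_smul_sub_midpoint {ι : Type*} [Fintype ι] (a : ℝ)
    (x y : EuclideanSpace ℝ ι) :
    (fun i => a * (y i - x i)) ⬝ᵥ (fun i => (y i + x i) / 2) = a / 2 * (‖y‖ ^ 2 - ‖x‖ ^ 2) := by
  simp only [dotProduct, EuclideanSpace.real_norm_sq_eq, ← Finset.sum_sub_distrib, Finset.mul_sum]
  exact Finset.sum_congr rfl fun i _ => by ring

theorem midpoint_stage_energy_general (n : ℕ) [NeZero n] (hn : 3 ≤ n)
    (ε μ c : ℝ)
    (e e' h h' : EuclideanSpace ℝ (Fin n))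
    (hstage : Sum.elim (fun i => ε * (e' i - e i)) (fun i => μ * (h' i - h i)) =
      c • (((calA n)⁻¹ * calB n) *ᵥ
        Sum.elim (fun i => (e' i + e i) / 2) (fun i => (h' i + h i) / 2))) :
    ε * ‖e'‖^2 + μ * ‖h'‖^2 = ε * ‖e‖^2 + μ * ‖h‖^2 := by
  have hskew := transpose_nonsing_inv_mul_eq_neg (calA_isSymm n) (transpose_calB n hn)
    (commute_calA_calB n)
  have hpair := congrArg (· ⬝ᵥ Sum.elim (fun i => (e' i + e i) / 2) (fun i => (h' i + h i) / 2))
    hstage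
  simp only [smul_dotProduct, mulVec_dotProduct_self_eq_zero hskew, smul_zero,
    sumElim_dotProduct_sumElim, EuclideanSpace.dotProduct_smul_sub_midpoint] at hpair
  linarith

theorem midpoint_stage_energy (n : ℕ) [NeZero n] (hn : 3 ≤ n) (hodd : Odd n)
    (ε μ c : ℝ) (hε : 0 < ε) (hμ : 0 < μ)
    (e e' h h' : EuclideanSpace ℝ (Fin n))
    (hstage : Sum.elim (fun i => ε * (e' i - e i)) (fun i => μ * (h' i - h i)) =
      c • (((calA n)⁻¹ * calB n) *ᵥ
        Sum.elim (fun i => (e' i + e i) / 2) (fun i => (h' i + h i) / 2))) :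
    ε * ‖e'‖^2 + μ * ‖h'‖^2 = ε * ‖e‖^2 + μ * ‖h‖^2 :=
  midpoint_stage_energy_general n hn ε μ c e e' h h' hstage
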